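/- arXiv:1602.03518 — 6 statements merged into one kernel-verified Lean document; each statement's English description precedes it below -/
import Mathlib

section
/- Let f = f_{β,E} be a generalized β-transformation. For every z ∈ ℂ with |z| > 1, the series Σ_{j≥1} s(j)d(j)z^{−j} and Σ_{j≥0} c_j z^{−j} converge absolutely and satisfy the identity 1 − Σ_{j=1}^∞ s(j)d(j) z^{−j} = (1 − β/z) · Σ_{j=0}^∞ c_j z^{−j}. -/
open Finset

/-- The index `k` such that `x ∈ I_k`, where `I_0 = [0, 1/β]`,
`I_k = (k/β, (k+1)/β]` for `1 ≤ k ≤ m-1` and `I_m = (m/β, 1]`. -/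
noncomputable def branchIdx (β x : ℝ) : ℕ := (⌈β * x⌉ - 1).toNat

/-- The generalized β-transformation `f_{β,E}`, where `E` records the signs of the branches. -/
noncomputable def gbeta (β : ℝ) (E : ℕ → ℤ) (x : ℝ) : ℝ :=
  if E (branchIdx β x) = 1 then β * x - branchIdx β x
  else -(β * x) + branchIdx β x + 1

/-- The sign `e(j)` of the branch containing `f^{j-1}(1)`. -/
noncomputable def esign (β : ℝ) (E : ℕ → ℤ) (j : ℕ) : ℤ :=
  E (branchIdx β ((gbeta β E)^[j - 1] 1))

/-- The cumulative sign `s(j)`, with `s(1) = 1` and `s(j+1) = e(j)·s(j)`. -/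
noncomputable def csign (β : ℝ) (E : ℕ → ℤ) (j : ℕ) : ℤ :=
  ∏ l ∈ Finset.Ico 1 j, esign β E l

/-- The digit `d(j)` of the (β,E)-expansion of 1. -/
noncomputable def digit (β : ℝ) (E : ℕ → ℤ) (j : ℕ) : ℕ :=
  if E (branchIdx β ((gbeta β E)^[j - 1] 1)) = 1
  then branchIdx β ((gbeta β E)^[j - 1] 1)
  else branchIdx β ((gbeta β E)^[j - 1] 1) + 1

/-- The signed orbit `c_j = s(j+1)·f^j(1)`, with `c_0 = 1`. -/
noncomputable def sorbit (β : ℝ) (E : ℕ → ℤ) (j : ℕ) : ℝ :=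
  (csign β E (j + 1) : ℝ) * (gbeta β E)^[j] 1

/-- The data `(m, β, E)` is valid for a generalized β-transformation:
`m ≥ 1`, `β ∈ (m, m+1]` and `E(0), …, E(m) ∈ {1, -1}`. -/
def IsGBetaValid (m : ℕ) (β : ℝ) (E : ℕ → ℤ) : Prop :=
  1 ≤ m ∧ (m : ℝ) < β ∧ β ≤ m + 1 ∧ ∀ k ≤ m, E k = 1 ∨ E k = -1

/-- `f_{β,E}` is post-critically finite: the orbit of `1` is finite. -/
def IsPCF (β : ℝ) (E : ℕ → ℤ) : Prop :=
  Set.Finite {x : ℝ | ∃ j : ℕ, (gbeta β E)^[j] 1 = x}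

/-- `β > 1` is a generalized Parry number if some `f_{β,E}` is post-critically finite. -/
def IsGenParry (β : ℝ) : Prop :=
  1 < β ∧ ∃ (m : ℕ) (E : ℕ → ℤ), IsGBetaValid m β E ∧ IsPCF β E

/-- `z` is a Galois conjugate of `β`: a root of the minimal polynomial of `β` over `ℚ`
different from `β` itself. -/
def IsGaloisConj (z : ℂ) (β : ℝ) : Prop :=
  z ≠ (β : ℂ) ∧ Polynomial.aeval z (minpoly ℚ β) = 0

/-- `Ω`: the set of all Galois conjugates of all generalized Parry numbers. -/
def OmegaSet : Set ℂ := {z : ℂ | ∃ β : ℝ, IsGenParry β ∧ IsGaloisConj z β}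

/-- `𝓖`: the set of zeros in the open unit disk of functions
`T(w) = 1 + Σ_{j≥1} a_j w^j` with coefficients `a_j ∈ [-1,1]` (the class `𝓕`). -/
def mathcalG : Set ℂ :=
  {l : ℂ | ‖l‖ < 1 ∧ ∃ a : ℕ → ℝ, (∀ j : ℕ, a (j + 1) ∈ Set.Icc (-1 : ℝ) 1) ∧
    1 + ∑' j : ℕ, (a (j + 1) : ℂ) * l ^ (j + 1) = 0}

/-- The itinerary data `It(j)` associated to a finite sequence `(s(j), a(j))_{j=1}^n`. -/
def ItSeq (n : ℕ) (s : ℕ → ℤ) (a : ℕ → ℕ) (j : ℕ) : ℕ :=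
  if j = n then a n else if s (j + 1) = s j then a j else a j - 1

/-- The tail sum `R_j(x) = Σ_{i=j}^{n-1} s(i+1) a(i+1) x^{-i}`. -/
noncomputable def RSum (n : ℕ) (s : ℕ → ℤ) (a : ℕ → ℕ) (j : ℕ) (x : ℝ) : ℝ :=
  ∑ i ∈ Finset.Ico j n, (s (i + 1) : ℝ) * (a (i + 1) : ℝ) * x ^ (-(i : ℤ))

/-- `x ∈ I_k`, for the partition of `[0,1]` into
`I_0 = [0, 1/β]`, `I_k = (k/β, (k+1)/β]` for `1 ≤ k ≤ m-1`, `I_m = (m/β, 1]`. -/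
def memI (β : ℝ) (m k : ℕ) (x : ℝ) : Prop :=
  if k = 0 then x ∈ Set.Icc (0 : ℝ) (1 / β)
  else if k = m then x ∈ Set.Ioc ((m : ℝ) / β) 1
  else x ∈ Set.Ioc ((k : ℝ) / β) (((k : ℝ) + 1) / β)

/-!
Write `x = f^j(1)` and `e = E(k)` for its branch `k`. Both branch formulas say
`e · f(x) = β x - d(j+1)`, and multiplying by `s(j+1)` gives the linear recurrence
`c_{j+1} = β c_j - s(j+1) d(j+1)`. Since the orbit stays in `[0,1]`, `|c_j| ≤ 1`, so
`Σ c_j z^{-j}` converges absolutely for `|z| > 1`; by the recurrence the digit series is the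
difference of `(β/z) Σ c_j z^{-j}` and its own shift, which telescopes to the identity.
-/

section Summation

variable {𝕜 : Type*} [NormedDivisionRing 𝕜]

lemma summable_norm_mul_zpow_neg {a : ℕ → 𝕜} {C : ℝ} {z : 𝕜} (ha : ∀ j, ‖a j‖ ≤ C)
    (hz : 1 < ‖z‖) : Summable fun j : ℕ => ‖a j * z ^ (-(j : ℤ))‖ := by
  have hgeo : Summable fun j : ℕ => ‖z‖⁻¹ ^ j :=
    summable_geometric_of_lt_one (by positivity) (inv_lt_one_of_one_lt₀ hz)
  refine Summable.of_nonneg_of_le (fun _ => norm_nonneg _) (fun j => ?_) (hgeo.mul_left C)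
  rw [norm_mul, norm_zpow, zpow_neg, zpow_natCast, ← inv_pow]
  exact mul_le_mul_of_nonneg_right (ha j) (by positivity)

lemma summable_norm_mul_sub_succ {g : ℕ → 𝕜} (hg : Summable fun j => ‖g j‖) (w : 𝕜) :
    Summable fun j => ‖w * g j - g (j + 1)‖ := by
  refine Summable.of_nonneg_of_le (fun _ => norm_nonneg _) (fun j => ?_)
    ((hg.mul_left ‖w‖).add ((summable_nat_add_iff 1).2 hg))
  rw [← norm_mul]
  exact norm_sub_le _ _

end Summation

lemma tsum_mul_sub_succ {R : Type*} [Ring R] [TopologicalSpace R] [IsTopologicalRing R]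
    [T2Space R] {g : ℕ → R} (hg : Summable g) (w : R) :
    ∑' j, (w * g j - g (j + 1)) = g 0 - (1 - w) * ∑' j, g j := by
  rw [(hg.mul_left w).tsum_sub ((summable_nat_add_iff 1).2 hg), hg.tsum_mul_left,
    hg.tsum_eq_zero_add, sub_mul, one_mul]
  abel

section GBeta

variable {β x : ℝ} {E : ℕ → ℤ}

lemma mul_le_branchIdx_add_one (β x : ℝ) : β * x ≤ branchIdx β x + 1 := by
  have hceil : ⌈β * x⌉ ≤ (branchIdx β x : ℤ) + 1 := by
    have := Int.self_le_toNat (⌈β * x⌉ - 1)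
    rw [branchIdx]
    omega
  have : (⌈β * x⌉ : ℝ) ≤ branchIdx β x + 1 := by exact_mod_cast hceil
  linarith [Int.le_ceil (β * x)]

lemma branchIdx_le_mul (h : 0 ≤ β * x) : (branchIdx β x : ℝ) ≤ β * x := by
  rcases le_or_gt (⌈β * x⌉ - 1) 0 with hc | hc
  · rw [branchIdx, Int.toNat_of_nonpos hc, Nat.cast_zero]
    exact h
  · have hk : ((branchIdx β x : ℤ) : ℝ) = ⌈β * x⌉ - 1 := by
      rw [branchIdx, Int.toNat_of_nonneg hc.le]
      push_cast
      ring
    rw [← Int.cast_natCast, hk]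
    linarith [Int.ceil_lt_add_one (β * x)]

lemma branchIdx_le_of_mul_le {n : ℕ} (h : β * x ≤ n + 1) : branchIdx β x ≤ n := by
  have : ⌈β * x⌉ ≤ (n : ℤ) + 1 := Int.ceil_le.2 (by exact_mod_cast h)
  rw [branchIdx]
  omega

lemma gbeta_mem_Icc (hβ : 0 ≤ β) (hx : x ∈ Set.Icc (0 : ℝ) 1) :
    gbeta β E x ∈ Set.Icc (0 : ℝ) 1 := by
  have h0 := branchIdx_le_mul (mul_nonneg hβ hx.1)
  have h1 := mul_le_branchIdx_add_one β x
  unfold gbeta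
  split_ifs <;> constructor <;> linarith

lemma iterate_gbeta_one_mem_Icc (hβ : 0 ≤ β) (j : ℕ) :
    (gbeta β E)^[j] 1 ∈ Set.Icc (0 : ℝ) 1 := by
  induction j with
  | zero => simp
  | succ j ih =>
    rw [Function.iterate_succ_apply']
    exact gbeta_mem_Icc hβ ih

lemma branchSign_mul_gbeta (hE : E (branchIdx β x) = 1 ∨ E (branchIdx β x) = -1) :
    (E (branchIdx β x) : ℝ) * gbeta β E x = β * x -
      ((if E (branchIdx β x) = 1 then branchIdx β x else branchIdx β x + 1 : ℕ) : ℝ) := by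
  rcases hE with hE | hE
  · simp [gbeta, hE]
  · simp only [gbeta, hE, reduceCtorEq, if_false, Int.cast_neg, Int.cast_one, Nat.cast_add,
      Nat.cast_one]
    ring

lemma csign_add_two (β : ℝ) (E : ℕ → ℤ) (j : ℕ) :
    csign β E (j + 2) = csign β E (j + 1) * esign β E (j + 1) :=
  prod_Ico_succ_top (by omega) _

end GBeta

namespace IsGBetaValid

variable {m : ℕ} {β x : ℝ} {E : ℕ → ℤ}

lemma nonneg (h : IsGBetaValid m β E) : 0 ≤ β :=
  (Nat.cast_nonneg m).trans h.2.1.le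

lemma branchSign (h : IsGBetaValid m β E) (hx : x ∈ Set.Icc (0 : ℝ) 1) :
    E (branchIdx β x) = 1 ∨ E (branchIdx β x) = -1 :=
  h.2.2.2 _ <| branchIdx_le_of_mul_le <| (mul_le_of_le_one_right h.nonneg hx.2).trans h.2.2.1

lemma abs_csign (h : IsGBetaValid m β E) (j : ℕ) : |csign β E j| = 1 := by
  rw [csign, abs_prod]
  refine prod_eq_one fun l _ => ?_
  rcases h.branchSign (iterate_gbeta_one_mem_Icc (E := E) h.nonneg (l - 1)) with hE | hE <;>
    simp [esign, hE]

lemma abs_sorbit_le_one (h : IsGBetaValid m β E) (j : ℕ) : |sorbit β E j| ≤ 1 := by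
  have hx := iterate_gbeta_one_mem_Icc (E := E) h.nonneg j
  rw [sorbit, abs_mul, ← Int.cast_abs, h.abs_csign, Int.cast_one, one_mul, abs_of_nonneg hx.1]
  exact hx.2

lemma sorbit_succ (h : IsGBetaValid m β E) (j : ℕ) :
    sorbit β E (j + 1) = β * sorbit β E j - csign β E (j + 1) * digit β E (j + 1) := by
  have hstep :=
    branchSign_mul_gbeta (h.branchSign (iterate_gbeta_one_mem_Icc (E := E) h.nonneg j))
  simp only [sorbit, csign_add_two, esign, digit, Nat.add_sub_cancel,
    Function.iterate_succ_apply'] at hstep ⊢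
  push_cast at hstep ⊢
  linear_combination (csign β E (j + 1) : ℝ) * hstep

lemma digit_term_eq (h : IsGBetaValid m β E) {z : ℂ} (hz : z ≠ 0) (j : ℕ) :
    (csign β E (j + 1) : ℂ) * (digit β E (j + 1) : ℂ) * z ^ (-(j : ℤ) - 1) =
      β / z * (sorbit β E j * z ^ (-(j : ℤ))) -
        sorbit β E (j + 1) * z ^ (-((j + 1 : ℕ) : ℤ)) := by
  have hrec : (sorbit β E (j + 1) : ℂ) =
      β * sorbit β E j - csign β E (j + 1) * digit β E (j + 1) := by
    exact_mod_cast congrArg ((↑) : ℝ → ℂ) (h.sorbit_succ j)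
  rw [hrec, Nat.cast_succ, neg_add, ← sub_eq_add_neg, zpow_sub_one₀ hz]
  field_simp
  ring

end IsGBetaValid

/-- For a generalized β-transformation and any `z ∈ ℂ` with `|z| > 1`,
the series `Σ_{j≥1} s(j)d(j)z^{-j}` and `Σ_{j≥0} c_j z^{-j}` converge absolutely and
`1 − Σ_{j=1}^∞ s(j)d(j) z^{−j} = (1 − β/z) · Σ_{j=0}^∞ c_j z^{−j}`. -/
theorem stmt1 (m : ℕ) (β : ℝ) (E : ℕ → ℤ) (h : IsGBetaValid m β E)
    (z : ℂ) (hz : 1 < ‖z‖) :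
    Summable (fun j : ℕ => ‖(csign β E (j + 1) : ℂ) * (digit β E (j + 1) : ℂ) * z ^ (-(j : ℤ) - 1)‖) ∧
    Summable (fun j : ℕ => ‖(sorbit β E j : ℂ) * z ^ (-(j : ℤ))‖) ∧
    1 - ∑' j : ℕ, (csign β E (j + 1) : ℂ) * (digit β E (j + 1) : ℂ) * z ^ (-(j : ℤ) - 1)
      = (1 - (β : ℂ) / z) * ∑' j : ℕ, (sorbit β E j : ℂ) * z ^ (-(j : ℤ)) := by
  have hz0 : z ≠ 0 := norm_pos_iff.1 (one_pos.trans hz)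
  set g : ℕ → ℂ := fun j => (sorbit β E j : ℂ) * z ^ (-(j : ℤ)) with hg_def
  have hg : Summable fun j => ‖g j‖ :=
    summable_norm_mul_zpow_neg (fun j => (Complex.norm_real _).trans_le (h.abs_sorbit_le_one j)) hz
  have hg0 : g 0 = 1 := by simp [hg_def, sorbit, csign]
  simp only [h.digit_term_eq hz0]
  refine ⟨summable_norm_mul_sub_succ hg _, hg, ?_⟩
  rw [tsum_mul_sub_succ hg.of_norm, hg0]
  ring
end

section
/- For every θ ∈ (0, π) and every sequence of real numbers (a_n)_{n≥1} with a_n ∈ [−1, 1], one has 1 + Σ_{n=1}^∞ a_n (e^{iθ}/2)^n ≠ 0. In other words, no function in the class 𝓕 has a zero of modulus exactly 1/2 with argument in (0, π). -/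
open Finset

/-!
Put `w = e^{iθ}/2`. Since `|a_n| ≤ 1`, the tail `Σ_{n≥2} a_n w^n` has modulus at most
`Σ_{n≥2} 2^{-n} = 1/2`. On the other hand `|1 + a₁w|² = 1 + a₁ cos θ + a₁²/4`, and this exceeds
`1/4` because `|cos θ| < 1` for `θ ∈ (0, π)`; so the tail cannot cancel `1 + a₁w`.
-/

section PowerSeriesBound

variable {𝕜 : Type*} [NormedDivisionRing 𝕜] {c : ℕ → 𝕜} {z : 𝕜}

lemma norm_mul_pow_le_of_norm_le_one (hc : ∀ n, ‖c n‖ ≤ 1) (n m : ℕ) :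
    ‖c n * z ^ m‖ ≤ ‖z‖ ^ m := by
  rw [norm_mul, norm_pow]
  exact mul_le_of_le_one_left (by positivity) (hc n)

lemma summable_geometric_add_of_lt_one {r : ℝ} (h₀ : 0 ≤ r) (h₁ : r < 1) (k : ℕ) :
    Summable fun n => r ^ (n + k) :=
  (summable_nat_add_iff k).2 (summable_geometric_of_lt_one h₀ h₁)

lemma summable_norm_mul_pow_add_of_norm_le_one (hc : ∀ n, ‖c n‖ ≤ 1) (hz : ‖z‖ < 1) (k : ℕ) :
    Summable fun n => ‖c n * z ^ (n + k)‖ :=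
  (summable_geometric_add_of_lt_one (norm_nonneg z) hz k).of_nonneg_of_le
    (fun _ => norm_nonneg _) (fun n => norm_mul_pow_le_of_norm_le_one hc n (n + k))

lemma norm_tsum_mul_pow_add_le (hc : ∀ n, ‖c n‖ ≤ 1) (hz : ‖z‖ < 1) (k : ℕ) :
    ‖∑' n, c n * z ^ (n + k)‖ ≤ ‖z‖ ^ k * (1 - ‖z‖)⁻¹ :=
  calc ‖∑' n, c n * z ^ (n + k)‖ ≤ ∑' n, ‖c n * z ^ (n + k)‖ :=
        norm_tsum_le_tsum_norm (summable_norm_mul_pow_add_of_norm_le_one hc hz k)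
    _ ≤ ∑' n, ‖z‖ ^ (n + k) :=
        (summable_norm_mul_pow_add_of_norm_le_one hc hz k).tsum_le_tsum
          (fun n => norm_mul_pow_le_of_norm_le_one hc n (n + k))
          (summable_geometric_add_of_lt_one (norm_nonneg z) hz k)
    _ = ‖z‖ ^ k * (1 - ‖z‖)⁻¹ := by
        simp_rw [pow_add, tsum_mul_right, tsum_geometric_of_lt_one (norm_nonneg z) hz, mul_comm]

end PowerSeriesBound

lemma one_half_lt_norm_one_add_mul_exp_div_two {a θ : ℝ} (ha : a ∈ Set.Icc (-1 : ℝ) 1)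
    (hsin : Real.sin θ ≠ 0) :
    1 / 2 < ‖1 + a * (Complex.exp (θ * Complex.I) / 2)‖ := by
  have hnormSq : ‖1 + a * (Complex.exp (θ * Complex.I) / 2)‖ ^ 2
      = 1 + a * Real.cos θ + a ^ 2 / 4 := by
    rw [Complex.sq_norm, Complex.normSq_apply]
    simp [Complex.exp_ofReal_mul_I_re, Complex.exp_ofReal_mul_I_im]
    linear_combination a ^ 2 / 4 * Real.sin_sq_add_cos_sq θ
  have hcos : |Real.cos θ| < 1 := by
    rw [← sq_lt_one_iff_abs_lt_one]
    linarith [Real.sin_sq_add_cos_sq θ, pow_pos (abs_pos.2 hsin) 2, sq_abs (Real.sin θ)]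
  obtain ⟨ha₁, ha₂⟩ := ha
  obtain ⟨hc₁, hc₂⟩ := abs_lt.1 hcos
  -- `a² + 4ac + 3 = (1 + a)(3 + a) + 4(-a)(1 - c) = (1 - a)(3 - a) + 4a(1 + c)`
  have hpos : 0 < a ^ 2 + 4 * a * Real.cos θ + 3 := by
    rcases le_total a 0 with h | h
    · nlinarith [mul_nonneg (neg_nonneg.2 h) (sub_pos.2 hc₂).le]
    · nlinarith
  refine lt_of_pow_lt_pow_left₀ 2 (norm_nonneg _) ?_
  rw [hnormSq]
  linarith

/-- For every `θ ∈ (0, π)` and every sequence `a_n ∈ [-1,1]`,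
`1 + Σ_{n=1}^∞ a_n (e^{iθ}/2)^n ≠ 0`: no function in `𝓕` has a zero of modulus exactly `1/2`
with argument in `(0, π)`. -/
theorem stmt7 (θ : ℝ) (hθ : θ ∈ Set.Ioo 0 Real.pi)
    (a : ℕ → ℝ) (ha : ∀ n : ℕ, 1 ≤ n → a n ∈ Set.Icc (-1 : ℝ) 1) :
    1 + ∑' n : ℕ, (a (n + 1) : ℂ) * (Complex.exp (θ * Complex.I) / 2) ^ (n + 1) ≠ 0 := by
  set w : ℂ := Complex.exp (θ * Complex.I) / 2
  have hw : ‖w‖ = 1 / 2 := by simp [w, Complex.norm_exp_ofReal_mul_I]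
  have hcoeff : ∀ n, ‖(a (n + 1) : ℂ)‖ ≤ 1 := fun n => by
    rw [Complex.norm_real, Real.norm_eq_abs, abs_le]
    exact ha (n + 1) (Nat.le_add_left 1 n)
  have hw₁ : ‖w‖ < 1 := by rw [hw]; norm_num
  have hsplit : ∑' n : ℕ, (a (n + 1) : ℂ) * w ^ (n + 1)
      = a 1 * w + ∑' n : ℕ, (a (n + 2) : ℂ) * w ^ (n + 2) := by
    rw [(summable_norm_mul_pow_add_of_norm_le_one hcoeff hw₁ 1).of_norm.tsum_eq_zero_add]
    simp
  have htail : ‖∑' n : ℕ, (a (n + 2) : ℂ) * w ^ (n + 2)‖ ≤ 1 / 2 :=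
    calc _ ≤ ‖w‖ ^ 2 * (1 - ‖w‖)⁻¹ := norm_tsum_mul_pow_add_le (fun n => hcoeff (n + 1)) hw₁ 2
      _ = 1 / 2 := by rw [hw]; norm_num
  have hhead : 1 / 2 < ‖1 + a 1 * w‖ :=
    one_half_lt_norm_one_add_mul_exp_div_two (ha 1 le_rfl) (Real.sin_pos_of_pos_of_lt_pi hθ.1 hθ.2).ne'
  intro hzero
  rw [hsplit, ← add_assoc, add_eq_zero_iff_eq_neg] at hzero
  rw [hzero, norm_neg] at hhead
  linarith
end

section
/- There exists ε > 0 such that every non-real λ ∈ ℂ with |λ| < 1 satisfying 1 + Σ_{j=1}^∞ a_j λ^j = 0 for some sequence of real coefficients a_j ∈ [−1, 1] has |λ| ≥ 1/2 + ε. Equivalently, the minimal modulus λ_φ of a zero of a function in 𝓕 with argument φ is bounded uniformly away from 1/2 for φ ∈ (0, π), so sup{λ_φ^{−1} : φ ∈ (0, π)} < 2. -/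
/-!
By the symmetries `λ ↦ conj λ` and `λ ↦ -λ` of the zero set we may take `λ = r e^{iθ}` with
`0 < θ ≤ π/2`. Since `|a_j| ≤ 1`, the real part of the equation reads
`Σ_j r^j (1 + a_j cos jθ) = r/(1-r) - 1` with nonnegative terms, so `r ≥ 1/2`, and for `r` close
to `1/2` every term is tiny. This forces `a_1 ≈ -1`, `θ ≤ π/10` and `a_j ≤ 0` for `j ≤ 5`. Then
the imaginary part `Σ_j a_j r^j sin jθ = 0` is impossible: its first five terms sum to at most
`a_1 r sin θ ≈ -(sin θ)/2`, while `|sin jθ| ≤ j sin θ` bounds the tail by `(2/5) sin θ`.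
-/

open Finset

open Real

lemma conj_mem_mathcalG {l : ℂ} (hl : l ∈ mathcalG) : (starRingEnd ℂ) l ∈ mathcalG := by
  obtain ⟨hnorm, a, ha, heq⟩ := hl
  refine ⟨by rwa [Complex.norm_conj], a, ha, ?_⟩
  simpa [Complex.conj_tsum, map_pow] using congrArg (starRingEnd ℂ) heq

lemma neg_mem_mathcalG {l : ℂ} (hl : l ∈ mathcalG) : -l ∈ mathcalG := by
  obtain ⟨hnorm, a, ha, heq⟩ := hl
  refine ⟨by rwa [norm_neg], fun j => (-1) ^ j * a j, fun j => ?_, ?_⟩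
  · rw [Set.mem_Icc, ← abs_le, abs_mul, abs_pow, abs_neg, abs_one, one_pow, one_mul]
    exact abs_le.2 (ha j)
  · convert heq using 2
    refine tsum_congr fun j => ?_
    push_cast
    rcases neg_one_pow_eq_or ℂ (j + 1) with h | h <;> simp [neg_pow l, h]

lemma exists_mem_mathcalG_re_nonneg_im_pos {l : ℂ} (hl : l ∈ mathcalG) (him : l.im ≠ 0) :
    ∃ z ∈ mathcalG, ‖z‖ = ‖l‖ ∧ 0 ≤ z.re ∧ 0 < z.im := by
  rcases him.lt_or_gt with him | him <;> rcases le_or_gt 0 l.re with hre | hre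
  · exact ⟨_, conj_mem_mathcalG hl, Complex.norm_conj l, by simpa, by simpa⟩
  · exact ⟨_, neg_mem_mathcalG hl, norm_neg l, by simpa using hre.le, by simpa⟩
  · exact ⟨l, hl, rfl, hre, him⟩
  · exact ⟨_, neg_mem_mathcalG (conj_mem_mathcalG hl), by simp, by simpa using hre.le, by simpa⟩

lemma re_pow_eq_norm_pow_mul_cos (z : ℂ) (n : ℕ) : (z ^ n).re = ‖z‖ ^ n * cos (n * z.arg) := by
  conv_lhs => rw [← Complex.norm_mul_exp_arg_mul_I z]
  rw [mul_pow, ← Complex.exp_nat_mul, ← Complex.ofReal_pow, ← mul_assoc, ← Complex.ofReal_natCast,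
    ← Complex.ofReal_mul, Complex.re_ofReal_mul, Complex.exp_ofReal_mul_I_re]

lemma im_pow_eq_norm_pow_mul_sin (z : ℂ) (n : ℕ) : (z ^ n).im = ‖z‖ ^ n * sin (n * z.arg) := by
  conv_lhs => rw [← Complex.norm_mul_exp_arg_mul_I z]
  rw [mul_pow, ← Complex.exp_nat_mul, ← Complex.ofReal_pow, ← mul_assoc, ← Complex.ofReal_natCast,
    ← Complex.ofReal_mul, Complex.im_ofReal_mul, Complex.exp_ofReal_mul_I_im]

lemma abs_sin_nat_mul_le (n : ℕ) (x : ℝ) : |sin (n * x)| ≤ n * |sin x| := by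
  induction n with
  | zero => simp
  | succ n ih =>
    rw [Nat.cast_succ, add_mul, one_mul, sin_add]
    calc |sin (n * x) * cos x + cos (n * x) * sin x|
        ≤ |sin (n * x)| * |cos x| + |cos (n * x)| * |sin x| := by
          simpa only [abs_mul] using abs_add_le (sin (n * x) * cos x) (cos (n * x) * sin x)
      _ ≤ n * |sin x| * 1 + 1 * |sin x| := by
          gcongr
          exacts [abs_cos_le_one x, abs_cos_le_one _]
      _ = (n + 1) * |sin x| := by ring

lemma hasSum_cos_sin_of_tsum_eq_zero {z : ℂ} (hz : ‖z‖ < 1) {a : ℕ → ℝ}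
    (ha : ∀ j : ℕ, a (j + 1) ∈ Set.Icc (-1 : ℝ) 1)
    (heq : 1 + ∑' j : ℕ, (a (j + 1) : ℂ) * z ^ (j + 1) = 0) :
    HasSum (fun j : ℕ => a (j + 1) * ‖z‖ ^ (j + 1) * cos ((j + 1 : ℕ) * z.arg)) (-1) ∧
      HasSum (fun j : ℕ => a (j + 1) * ‖z‖ ^ (j + 1) * sin ((j + 1 : ℕ) * z.arg)) 0 := by
  have hgeo : Summable (fun j : ℕ => ‖z‖ ^ (j + 1)) :=
    (summable_nat_add_iff 1).2 (summable_geometric_of_lt_one (norm_nonneg z) hz)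
  have hsum : Summable (fun j : ℕ => (a (j + 1) : ℂ) * z ^ (j + 1)) := by
    refine .of_norm_bounded hgeo fun j => ?_
    rw [norm_mul, norm_pow, Complex.norm_real]
    exact mul_le_of_le_one_left (by positivity) (abs_le.2 (ha j))
  have hS : HasSum (fun j : ℕ => (a (j + 1) : ℂ) * z ^ (j + 1)) (-1) := by
    rw [← eq_neg_of_add_eq_zero_right heq]
    exact hsum.hasSum
  constructor
  · simpa [Complex.re_ofReal_mul, re_pow_eq_norm_pow_mul_cos, mul_assoc] using Complex.hasSum_re hS
  · simpa [Complex.im_ofReal_mul, im_pow_eq_norm_pow_mul_sin, mul_assoc] using Complex.hasSum_im hS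

lemma one_add_mul_cos_nonneg {c : ℝ} (hc : c ∈ Set.Icc (-1 : ℝ) 1) (x : ℝ) :
    0 ≤ 1 + c * cos x := by
  have h : |c * cos x| ≤ 1 := by
    rw [abs_mul]
    exact mul_le_one₀ (abs_le.2 hc) (abs_nonneg _) (abs_cos_le_one x)
  linarith [neg_abs_le (c * cos x)]

lemma le_pi_div_ten_of_one_sub_cos_le {x : ℝ} (hx0 : 0 ≤ x) (hxπ : x ≤ π)
    (h : 1 - cos x ≤ 1 / 100) : x ≤ π / 10 := by
  have hcos := cos_le_one_sub_mul_cos_sq (abs_le.2 ⟨by linarith [pi_pos], hxπ⟩)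
  have hsq : 2 * x ^ 2 ≤ π ^ 2 / 100 := by
    have : 2 / π ^ 2 * x ^ 2 ≤ 1 / 100 := by linarith
    rw [div_mul_eq_mul_div, div_le_iff₀ (by positivity)] at this
    linarith
  have : x ^ 2 ≤ (π / 10) ^ 2 := by nlinarith [sq_nonneg x]
  exact (pow_le_pow_iff_left₀ hx0 (by positivity) two_ne_zero).1 this

section PolarForm

variable {r θ : ℝ} {a : ℕ → ℝ}

lemma pow_mul_one_add_mul_cos_le (hr0 : 0 ≤ r) (hr1 : r < 1)
    (ha : ∀ j : ℕ, a (j + 1) ∈ Set.Icc (-1 : ℝ) 1)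
    (hcos : HasSum (fun j : ℕ => a (j + 1) * r ^ (j + 1) * cos ((j + 1 : ℕ) * θ)) (-1)) (j : ℕ) :
    r ^ (j + 1) * (1 + a (j + 1) * cos ((j + 1 : ℕ) * θ)) ≤ (2 * r - 1) / (1 - r) := by
  have hgeo : HasSum (fun j : ℕ => r ^ (j + 1)) (r / (1 - r)) := by
    simpa [pow_succ', div_eq_mul_inv] using (hasSum_geometric_of_lt_one hr0 hr1).mul_left r
  have h := hgeo.add hcos
  rw [show r / (1 - r) + -1 = (2 * r - 1) / (1 - r) by field_simp [(sub_pos.2 hr1).ne']; ring] at h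
  calc r ^ (j + 1) * (1 + a (j + 1) * cos ((j + 1 : ℕ) * θ))
      = r ^ (j + 1) + a (j + 1) * r ^ (j + 1) * cos ((j + 1 : ℕ) * θ) := by ring
    _ ≤ (2 * r - 1) / (1 - r) := le_hasSum h j fun i _ => by
        nlinarith [mul_nonneg (pow_nonneg hr0 (i + 1))
          (one_add_mul_cos_nonneg (ha i) ((i + 1 : ℕ) * θ))]

lemma half_le_of_hasSum_cos (hr0 : 0 ≤ r) (hr1 : r < 1)
    (ha : ∀ j : ℕ, a (j + 1) ∈ Set.Icc (-1 : ℝ) 1)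
    (hcos : HasSum (fun j : ℕ => a (j + 1) * r ^ (j + 1) * cos ((j + 1 : ℕ) * θ)) (-1)) :
    1 / 2 ≤ r := by
  have h := (mul_nonneg (pow_nonneg hr0 1) (one_add_mul_cos_nonneg (ha 0) _)).trans
    (pow_mul_one_add_mul_cos_le hr0 hr1 ha hcos 0)
  rw [le_div_iff₀ (by linarith)] at h
  linarith

lemma le_and_le_pi_div_ten_of_mul_one_add_mul_cos_le {c x : ℝ} (hc : -1 ≤ c) (hr : 1 / 2 ≤ r)
    (hx0 : 0 ≤ x) (hx : x ≤ π / 2) (h : r * (1 + c * cos x) ≤ 1 / 200) :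
    c ≤ -99 / 100 ∧ x ≤ π / 10 := by
  have hcos0 : 0 ≤ cos x := cos_nonneg_of_mem_Icc ⟨by linarith [pi_pos], hx⟩
  have hcos1 := cos_le_one x
  have ht : 0 ≤ 1 + c * cos x := by nlinarith
  have h' : 1 + c * cos x ≤ 1 / 100 := by nlinarith [mul_nonneg (sub_nonneg.2 hr) ht]
  have h1 : 1 - cos x ≤ 1 / 100 := by nlinarith
  refine ⟨?_, le_pi_div_ten_of_one_sub_cos_le hx0 (by linarith [pi_pos]) h1⟩
  by_contra! hlt
  nlinarith [mul_pos (by linarith : 0 < c + 99 / 100) (by linarith : 0 < cos x)]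

lemma le_two_fifths_mul_sin_of_hasSum_tail (hr0 : 0 ≤ r) (hr : r ≤ 51 / 100)
    (ha : ∀ j : ℕ, a (j + 1) ∈ Set.Icc (-1 : ℝ) 1) (hθ : 0 ≤ sin θ) {t : ℝ}
    (ht : HasSum (fun j : ℕ => a (j + 5 + 1) * r ^ (j + 5 + 1) * sin ((j + 5 + 1 : ℕ) * θ)) t) :
    t ≤ 2 / 5 * sin θ := by
  set ρ : ℝ := 51 / 100
  have hρ : HasSum (fun j : ℕ => ((j + 6 : ℕ) : ℝ) * ρ ^ (j + 6))
      (ρ / (1 - ρ) ^ 2 - ∑ i ∈ range 6, (i : ℝ) * ρ ^ i) :=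
    (hasSum_nat_add_iff' 6).2 (hasSum_coe_mul_geometric_of_norm_lt_one (by norm_num [ρ]))
  have hval : ρ / (1 - ρ) ^ 2 - ∑ i ∈ range 6, (i : ℝ) * ρ ^ i ≤ 2 / 5 := by
    norm_num [ρ, sum_range_succ]
  refine (hasSum_le (fun j => ?_) ht (hρ.mul_right (sin θ))).trans
    (mul_le_mul_of_nonneg_right hval hθ)
  calc a (j + 5 + 1) * r ^ (j + 5 + 1) * sin ((j + 5 + 1 : ℕ) * θ)
      ≤ |a (j + 5 + 1) * r ^ (j + 5 + 1) * sin ((j + 5 + 1 : ℕ) * θ)| := le_abs_self _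
    _ = |a (j + 5 + 1)| * r ^ (j + 6) * |sin ((j + 6 : ℕ) * θ)| := by
        rw [abs_mul, abs_mul, abs_of_nonneg (pow_nonneg hr0 _)]
    _ ≤ 1 * ρ ^ (j + 6) * ((j + 6 : ℕ) * sin θ) := by
        gcongr
        · exact abs_le.2 (ha _)
        · simpa [abs_of_nonneg hθ] using abs_sin_nat_mul_le (j + 6) θ
    _ = ((j + 6 : ℕ) : ℝ) * ρ ^ (j + 6) * sin θ := by ring

lemma sum_range_succ_le_of_coeff_nonpos {n : ℕ} (hr0 : 0 ≤ r) (hr : 1 / 2 ≤ r)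
    (ha1 : a 1 ≤ -99 / 100) (hθ : 0 ≤ sin θ) (hnonpos : ∀ j < n + 1, a (j + 1) ≤ 0)
    (hsin : ∀ j < n + 1, 0 ≤ sin ((j + 1 : ℕ) * θ)) :
    ∑ j ∈ range (n + 1), a (j + 1) * r ^ (j + 1) * sin ((j + 1 : ℕ) * θ) ≤ -(99 / 200) * sin θ := by
  have hrest : ∑ j ∈ range n, a (j + 1 + 1) * r ^ (j + 1 + 1) * sin ((j + 1 + 1 : ℕ) * θ) ≤ 0 :=
    sum_nonpos fun j hj => by
      have hj' : j + 1 < n + 1 := by simp only [mem_range] at hj; omega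
      exact mul_nonpos_of_nonpos_of_nonneg
        (mul_nonpos_of_nonpos_of_nonneg (hnonpos _ hj') (pow_nonneg hr0 _)) (hsin _ hj')
  have ha1r : a 1 * r ≤ -(99 / 200) := by nlinarith
  rw [sum_range_succ']
  simp only [zero_add, pow_one, Nat.cast_one, one_mul]
  nlinarith [mul_le_mul_of_nonneg_right ha1r hθ]

theorem half_add_le_of_hasSum_cos_sin (hr0 : 0 ≤ r) (hr1 : r < 1) (hθ0 : 0 < θ) (hθ : θ ≤ π / 2)
    (ha : ∀ j : ℕ, a (j + 1) ∈ Set.Icc (-1 : ℝ) 1)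
    (hcos : HasSum (fun j : ℕ => a (j + 1) * r ^ (j + 1) * cos ((j + 1 : ℕ) * θ)) (-1))
    (hsin : HasSum (fun j : ℕ => a (j + 1) * r ^ (j + 1) * sin ((j + 1 : ℕ) * θ)) 0) :
    1 / 2 + 1 / 1000 ≤ r := by
  by_contra! hr
  have hhalf := half_le_of_hasSum_cos hr0 hr1 ha hcos
  have hslack (j : ℕ) : r ^ (j + 1) * (1 + a (j + 1) * cos ((j + 1 : ℕ) * θ)) ≤ 1 / 200 :=
    (pow_mul_one_add_mul_cos_le hr0 hr1 ha hcos j).trans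
      (by rw [div_le_iff₀ (by linarith)]; linarith)
  obtain ⟨ha1, hθ10⟩ := le_and_le_pi_div_ten_of_mul_one_add_mul_cos_le (ha 0).1 hhalf hθ0.le hθ
    (by simpa using hslack 0)
  have hcos_sin_nonneg (j : ℕ) (hj : j < 5) :
      0 ≤ cos ((j + 1 : ℕ) * θ) ∧ 0 ≤ sin ((j + 1 : ℕ) * θ) := by
    have : ((j + 1 : ℕ) : ℝ) ≤ 5 := by exact_mod_cast hj
    have h0 : 0 ≤ ((j + 1 : ℕ) : ℝ) * θ := by positivity
    have h1 : ((j + 1 : ℕ) : ℝ) * θ ≤ π / 2 := by nlinarith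
    exact ⟨cos_nonneg_of_mem_Icc ⟨by linarith [pi_pos], h1⟩,
      sin_nonneg_of_nonneg_of_le_pi h0 (by linarith [pi_pos])⟩
  have hnonpos (j : ℕ) (hj : j < 5) : a (j + 1) ≤ 0 := by
    by_contra! hpos
    have hpow : (1 / 2) ^ 5 ≤ r ^ (j + 1) :=
      (pow_le_pow_of_le_one (by norm_num) (by norm_num) hj).trans
        (pow_le_pow_left₀ (by norm_num) hhalf _)
    nlinarith [hslack j, mul_nonneg hpos.le (hcos_sin_nonneg j hj).1, pow_nonneg hr0 (j + 1)]
  have hsinθ := sin_pos_of_pos_of_lt_pi hθ0 (by linarith [pi_pos])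
  have hhead := sum_range_succ_le_of_coeff_nonpos (n := 4) hr0 hhalf ha1 hsinθ.le hnonpos
    fun j hj => (hcos_sin_nonneg j hj).2
  have htail := le_two_fifths_mul_sin_of_hasSum_tail hr0 (by linarith) ha hsinθ.le
    ((hasSum_nat_add_iff' 5).2 hsin)
  linarith

end PolarForm

/-- There is `ε > 0` such that every non-real zero `λ` (in the open unit disk) of a
power series `1 + Σ_{j≥1} a_j w^j` with coefficients `a_j ∈ [-1,1]` satisfies `|λ| ≥ 1/2 + ε`. -/
theorem stmt8 :
    ∃ ε > (0 : ℝ), ∀ l : ℂ, l.im ≠ 0 → ‖l‖ < 1 →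
      (∃ a : ℕ → ℝ, (∀ j : ℕ, a (j + 1) ∈ Set.Icc (-1 : ℝ) 1) ∧
        1 + ∑' j : ℕ, (a (j + 1) : ℂ) * l ^ (j + 1) = 0) →
      1 / 2 + ε ≤ ‖l‖ := by
  refine ⟨1 / 1000, by norm_num, fun l him hl hzero => ?_⟩
  obtain ⟨z, ⟨hz, a, ha, heq⟩, hnorm, hre, him'⟩ :=
    exists_mem_mathcalG_re_nonneg_im_pos ⟨hl, hzero⟩ him
  obtain ⟨hcos, hsin⟩ := hasSum_cos_sin_of_tsum_eq_zero hz ha heq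
  have harg : 0 < z.arg :=
    (Complex.arg_nonneg_iff.2 him'.le).lt_of_ne' fun h => him'.ne' (Complex.arg_eq_zero_iff.1 h).2
  rw [← hnorm]
  exact half_add_le_of_hasSum_cos_sin (norm_nonneg z) hz harg
    (Complex.arg_le_pi_div_two_iff.2 (Or.inl hre)) ha hcos hsin
end

section
/- Under the hypotheses (H1) and (H3) on the sequence (s(j), a(j)), for every x ∈ [It(1), It(1)+1] and every j ∈ {1, …, n−1}, one has |R_j(x)| < x^{−(j−1)}. -/
open Finset

/-! Since `|s(i+1)| = 1` and `a(i+1) ≤ It(1) - 1 ≤ x - 1`, each term of `R_j(x)` is at most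
`(x - 1) x^{-i} = x^{-(i-1)} - x^{-i}` in absolute value, and these bounds telescope to
`x^{-(j-1)} - x^{-(n-1)} < x^{-(j-1)}`. -/

theorem sum_Ico_zpow_neg_mul_sub_one {x : ℝ} (hx : x ≠ 0) {j n : ℕ} (hjn : j ≤ n) :
    (∑ i ∈ Ico j n, x ^ (-(i : ℤ))) * (x - 1) =
      x ^ (-((j : ℤ) - 1)) - x ^ (-((n : ℤ) - 1)) := by
  have htelescope (i : ℕ) : x ^ (-(i : ℤ)) * (x - 1) =
      -(x ^ (-(((i + 1 : ℕ) : ℤ) - 1)) - x ^ (-((i : ℤ) - 1))) := by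
    rw [mul_sub, mul_one, ← zpow_add_one₀ hx]
    push_cast
    ring_nf
  rw [sum_mul, sum_congr rfl fun i _ => htelescope i, sum_neg_distrib,
    sum_Ico_sub (fun i : ℕ => x ^ (-((i : ℤ) - 1))) hjn, neg_sub]

theorem sum_Ico_zpow_neg_mul_lt {x c : ℝ} (hx : 1 < x) (hc : c ≤ x - 1) {j n : ℕ}
    (hjn : j ≤ n) : c * ∑ i ∈ Ico j n, x ^ (-(i : ℤ)) < x ^ (-((j : ℤ) - 1)) := by
  have hx0 : 0 < x := one_pos.trans hx
  have hsum : 0 ≤ ∑ i ∈ Ico j n, x ^ (-(i : ℤ)) := sum_nonneg fun i _ => by positivity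
  calc c * ∑ i ∈ Ico j n, x ^ (-(i : ℤ))
      ≤ (∑ i ∈ Ico j n, x ^ (-(i : ℤ))) * (x - 1) := by
        rw [mul_comm]; exact mul_le_mul_of_nonneg_left hc hsum
    _ = x ^ (-((j : ℤ) - 1)) - x ^ (-((n : ℤ) - 1)) := sum_Ico_zpow_neg_mul_sub_one hx0.ne' hjn
    _ < x ^ (-((j : ℤ) - 1)) := sub_lt_self _ (zpow_pos hx0 _)

theorem abs_RSum_le {n : ℕ} {s : ℕ → ℤ} {a : ℕ → ℕ} {j : ℕ} {x c : ℝ} (hx : 0 < x)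
    (hs : ∀ i ∈ Ico j n, |s (i + 1)| = 1) (ha : ∀ i ∈ Ico j n, (a (i + 1) : ℝ) ≤ c) :
    |RSum n s a j x| ≤ c * ∑ i ∈ Ico j n, x ^ (-(i : ℤ)) := by
  rw [RSum, mul_sum]
  refine (abs_sum_le_sum_abs _ _).trans (sum_le_sum fun i hi => ?_)
  rw [abs_mul, abs_mul, ← Int.cast_abs, hs i hi, Int.cast_one, one_mul, Nat.abs_cast,
    abs_of_pos (zpow_pos hx _)]
  exact mul_le_mul_of_nonneg_right (ha i hi) (zpow_pos hx _).le

theorem stmt9_general (n : ℕ) (s : ℕ → ℤ) (a : ℕ → ℕ)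
    (hs : ∀ j : ℕ, 1 ≤ j → j ≤ n → s j = 1 ∨ s j = -1) (han : a n ≠ 0)
    (H1 : ∀ j : ℕ, 2 ≤ j → j ≤ n → a j < ItSeq n s a 1) :
    ∀ x ∈ Set.Icc (ItSeq n s a 1 : ℝ) ((ItSeq n s a 1 : ℝ) + 1),
      ∀ j : ℕ, 1 ≤ j → j ≤ n - 1 → |RSum n s a j x| < x ^ (-((j : ℤ) - 1)) := by
  intro x hx j hj hjn
  have hsign : ∀ i ∈ Ico j n, |s (i + 1)| = 1 := by
    intro i hi
    obtain ⟨hji, hin⟩ := mem_Ico.1 hi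
    rcases hs (i + 1) (by omega) (by omega) with h | h <;> simp [h]
  have hdigit_le : ∀ i ∈ Ico j n, (a (i + 1) : ℝ) ≤ (ItSeq n s a 1 : ℝ) - 1 := by
    intro i hi
    obtain ⟨hji, hin⟩ := mem_Ico.1 hi
    rw [le_sub_iff_add_le]
    exact_mod_cast H1 (i + 1) (by omega) (by omega)
  have hx1 : 1 < x := by
    have hIt : 2 ≤ ItSeq n s a 1 := by have := H1 n (by omega) le_rfl; omega
    have : (2 : ℝ) ≤ ItSeq n s a 1 := by exact_mod_cast hIt
    linarith [hx.1]
  exact (abs_RSum_le (by linarith) hsign hdigit_le).trans_lt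
    (sum_Ico_zpow_neg_mul_lt hx1 (by linarith [hx.1]) (by omega))

/-- Under hypotheses (H1) and (H3), for `x ∈ [It(1), It(1)+1]` and
`1 ≤ j ≤ n−1`, one has `|R_j(x)| < x^{−(j−1)}`. -/
theorem stmt9 (n : ℕ) (hn : 2 ≤ n) (s : ℕ → ℤ) (a : ℕ → ℕ)
    (hs1 : s 1 = 1) (hs : ∀ j : ℕ, 1 ≤ j → j ≤ n → s j = 1 ∨ s j = -1) (han : a n ≠ 0)
    (H1 : ∀ j : ℕ, 2 ≤ j → j ≤ n → a j < ItSeq n s a 1)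
    (H3 : ∀ j : ℕ, 1 ≤ j → j ≤ n - 1 → a j = 0 → s (j + 1) = s j) :
    ∀ x ∈ Set.Icc (ItSeq n s a 1 : ℝ) ((ItSeq n s a 1 : ℝ) + 1),
      ∀ j : ℕ, 1 ≤ j → j ≤ n - 1 → |RSum n s a j x| < x ^ (-((j : ℤ) - 1)) :=
  stmt9_general n s a hs han H1
end

section
/- Under the hypotheses (H1) and (H3) on the sequence (s(j), a(j)), for every x ∈ [It(1), It(1)+1] and every j ∈ {1, …, n−1}, one has sign(R_j(x)) = s(j+1); that is, s(j+1)·R_j(x) > 0. -/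
open Finset

/-! Since `It(1) > a(n) ≥ 1`, every `x ≥ It(1)` satisfies `x > 1` and `a(i) ≤ x - 1` for
`i ≥ 2`, so the tail `Σ_{i>j}` of `R_j(x)` is bounded in absolute value by the telescoping sum
`Σ_{i>j} (x - 1) x^{-i} < x^{-j}`. Hence the leading term `s(j+1) a(j+1) x^{-j}` decides the sign
of `R_j(x)` whenever `a(j+1) ≠ 0`; when `a(j+1) = 0`, (H3) gives `s(j+2) = s(j+1)` and
`R_j = R_{j+1}`, so the claim follows by downward induction on `j`. -/

lemma sum_Ico_sub_one_mul_zpow_neg {x : ℝ} (hx : x ≠ 0) {m N : ℕ} (hmN : m ≤ N) :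
    ∑ i ∈ Ico m N, (x - 1) * x ^ (-(i : ℤ)) = x ^ (1 - (m : ℤ)) - x ^ (1 - (N : ℤ)) := by
  have hterm : ∀ i : ℕ, (x - 1) * x ^ (-(i : ℤ))
      = -x ^ (1 - ((i + 1 : ℕ) : ℤ)) - -x ^ (1 - (i : ℤ)) := by
    intro i
    rw [show (1 : ℤ) - (i : ℤ) = 1 + -(i : ℤ) by ring, zpow_add₀ hx, zpow_one,
      show (1 : ℤ) - ((i + 1 : ℕ) : ℤ) = -(i : ℤ) by push_cast; ring]
    ring
  simp_rw [hterm]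
  rw [sum_Ico_sub (fun i : ℕ => -x ^ (1 - (i : ℤ))) hmN]
  ring

lemma abs_sum_Ico_mul_zpow_neg_lt {x : ℝ} (hx : 1 < x) {b : ℕ → ℝ} {j N : ℕ}
    (hb : ∀ i ∈ Ico (j + 1) N, |b i| ≤ x - 1) :
    |∑ i ∈ Ico (j + 1) N, b i * x ^ (-(i : ℤ))| < x ^ (-(j : ℤ)) := by
  have hx0 : 0 < x := by linarith
  rcases le_or_gt N (j + 1) with hN | hN
  · rw [Ico_eq_empty_of_le hN, sum_empty, abs_zero]
    exact zpow_pos hx0 _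
  calc |∑ i ∈ Ico (j + 1) N, b i * x ^ (-(i : ℤ))|
      ≤ ∑ i ∈ Ico (j + 1) N, (x - 1) * x ^ (-(i : ℤ)) := by
        refine (abs_sum_le_sum_abs _ _).trans (sum_le_sum fun i hi => ?_)
        rw [abs_mul, abs_of_pos (zpow_pos hx0 _)]
        exact mul_le_mul_of_nonneg_right (hb i hi) (zpow_pos hx0 _).le
    _ = x ^ (-(j : ℤ)) - x ^ (1 - (N : ℤ)) := by
        rw [sum_Ico_sub_one_mul_zpow_neg hx0.ne' hN.le]
        push_cast
        ring_nf
    _ < x ^ (-(j : ℤ)) := sub_lt_self _ (zpow_pos hx0 _)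

section RSum

variable {n : ℕ} {s : ℕ → ℤ} {a : ℕ → ℕ} {x : ℝ} {j : ℕ}

lemma RSum_eq_add_RSum_succ (hj : j < n) :
    RSum n s a j x = s (j + 1) * a (j + 1) * x ^ (-(j : ℤ)) + RSum n s a (j + 1) x :=
  sum_eq_sum_Ico_succ_bot hj _

lemma sign_mul_RSum_pos_of_ne_zero (hx : 1 < x)
    (hs : ∀ i, 1 ≤ i → i ≤ n → s i = 1 ∨ s i = -1)
    (hax : ∀ i, 2 ≤ i → i ≤ n → (a i : ℝ) ≤ x - 1) (hj : j < n)
    (haj : a (j + 1) ≠ 0) :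
    0 < (s (j + 1) : ℝ) * RSum n s a j x := by
  have habs (i : ℕ) (h1 : 1 ≤ i) (hi : i ≤ n) : |(s i : ℝ)| = 1 := by
    rcases hs i h1 hi with h | h <;> simp [h]
  have hsq (i : ℕ) (h1 : 1 ≤ i) (hi : i ≤ n) : (s i : ℝ) * s i = 1 := by
    rw [← abs_mul_self, abs_mul, habs i h1 hi, one_mul]
  have htail : |(s (j + 1) : ℝ) * RSum n s a (j + 1) x| < x ^ (-(j : ℤ)) := by
    rw [abs_mul, habs (j + 1) (by omega) hj, one_mul]
    refine abs_sum_Ico_mul_zpow_neg_lt hx fun i hi => ?_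
    rw [mem_Ico] at hi
    rw [abs_mul, habs (i + 1) (by omega) (by omega), one_mul, Nat.abs_cast]
    exact hax (i + 1) (by omega) (by omega)
  have hlead : x ^ (-(j : ℤ)) ≤ (a (j + 1) : ℝ) * x ^ (-(j : ℤ)) :=
    le_mul_of_one_le_left (zpow_pos (by linarith) _).le
      (by exact_mod_cast Nat.one_le_iff_ne_zero.mpr haj)
  rw [RSum_eq_add_RSum_succ hj, mul_add, ← mul_assoc, ← mul_assoc, hsq (j + 1) (by omega) hj,
    one_mul]
  linarith [neg_abs_le ((s (j + 1) : ℝ) * RSum n s a (j + 1) x)]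

lemma sign_mul_RSum_pos_of_succ (hx : 1 < x)
    (hs : ∀ i, 1 ≤ i → i ≤ n → s i = 1 ∨ s i = -1)
    (hax : ∀ i, 2 ≤ i → i ≤ n → (a i : ℝ) ≤ x - 1) (hj : j + 1 < n)
    (hzero : a (j + 1) = 0 → s (j + 2) = s (j + 1))
    (ih : 0 < (s (j + 2) : ℝ) * RSum n s a (j + 1) x) :
    0 < (s (j + 1) : ℝ) * RSum n s a j x := by
  by_cases haj : a (j + 1) = 0
  · rwa [RSum_eq_add_RSum_succ (by omega), haj, Nat.cast_zero, mul_zero, zero_mul, zero_add,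
      ← hzero haj]
  · exact sign_mul_RSum_pos_of_ne_zero hx hs hax (by omega) haj

end RSum

theorem stmt10_general (n : ℕ) (s : ℕ → ℤ) (a : ℕ → ℕ)
    (hs : ∀ j : ℕ, 1 ≤ j → j ≤ n → s j = 1 ∨ s j = -1) (han : a n ≠ 0)
    (H1 : ∀ j : ℕ, 2 ≤ j → j ≤ n → a j < ItSeq n s a 1)
    (H3 : ∀ j : ℕ, 1 ≤ j → j ≤ n - 1 → a j = 0 → s (j + 1) = s j) :
    ∀ x ∈ Set.Icc (ItSeq n s a 1 : ℝ) ((ItSeq n s a 1 : ℝ) + 1),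
      ∀ j : ℕ, 1 ≤ j → j ≤ n - 1 → 0 < (s (j + 1) : ℝ) * RSum n s a j x := by
  intro x hx j hj1 hjn
  have hn : 2 ≤ n := by omega
  have hax : ∀ i, 2 ≤ i → i ≤ n → (a i : ℝ) ≤ x - 1 := fun i h2 hi => by
    have : (a i : ℝ) + 1 ≤ ItSeq n s a 1 := by exact_mod_cast H1 i h2 hi
    linarith [hx.1]
  have hx1 : 1 < x := by
    have : (1 : ℝ) ≤ a n := by exact_mod_cast Nat.one_le_iff_ne_zero.mpr han
    linarith [hax n hn le_rfl]
  clear hj1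
  induction hjn using Nat.decreasingInduction with
  | self =>
    refine sign_mul_RSum_pos_of_ne_zero hx1 hs hax (by omega) ?_
    rwa [Nat.sub_add_cancel (by omega)]
  | of_succ k hk ih =>
    exact sign_mul_RSum_pos_of_succ hx1 hs hax (by omega) (H3 (k + 1) (by omega) (by omega)) ih

/-- Under hypotheses (H1) and (H3), for `x ∈ [It(1), It(1)+1]` and
`1 ≤ j ≤ n−1`, one has `sign(R_j(x)) = s(j+1)`, i.e. `s(j+1)·R_j(x) > 0`. -/
theorem stmt10 (n : ℕ) (hn : 2 ≤ n) (s : ℕ → ℤ) (a : ℕ → ℕ)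
    (hs1 : s 1 = 1) (hs : ∀ j : ℕ, 1 ≤ j → j ≤ n → s j = 1 ∨ s j = -1) (han : a n ≠ 0)
    (H1 : ∀ j : ℕ, 2 ≤ j → j ≤ n → a j < ItSeq n s a 1)
    (H3 : ∀ j : ℕ, 1 ≤ j → j ≤ n - 1 → a j = 0 → s (j + 1) = s j) :
    ∀ x ∈ Set.Icc (ItSeq n s a 1 : ℝ) ((ItSeq n s a 1 : ℝ) + 1),
      ∀ j : ℕ, 1 ≤ j → j ≤ n - 1 → 0 < (s (j + 1) : ℝ) * RSum n s a j x :=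
  stmt10_general n s a hs han H1 H3
end

section
/- Under the hypotheses (H1) and (H3) on the sequence (s(j), a(j)), there exists β ∈ (It(1), It(1)+1) such that β = s(1)a(1) + s(2)a(2)/β + s(3)a(3)/β² + … + s(n)a(n)/β^{n−1}. -/
open Finset

/-!
With `T_j(x) = Σ_{i=j}^{n} s(i) a(i) x^{j-i}` we have `T_j(x) = s(j) a(j) + T_{j+1}(x)/x`, and the
equation for `β` says that `β` is a fixed point of `T_1`. For `x ≥ It(1)`, downward induction on `j`
gives `0 < s(j) T_j(x) < x` for `2 ≤ j ≤ n`: indeed `s(j) T_j(x) = a(j) ± u` with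
`u = s(j+1) T_{j+1}(x)/x ∈ (0,1)`, where `a(j) + 1 ≤ It(1) ≤ x` by (H1), and the minus sign occurs
only at a sign change, where (H3) gives `a(j) ≥ 1`. At `j = 1` this reads `T_1(x) = It(1) + u` if
`s(2) = 1` and `T_1(x) = It(1) + 1 - u` if `s(2) = -1`, so `T_1` maps `[It(1), It(1)+1]` into its
interior and therefore has a fixed point there.
-/

noncomputable def tailSum (n : ℕ) (s : ℕ → ℤ) (a : ℕ → ℕ) (j : ℕ) (x : ℝ) : ℝ :=
  ∑ i ∈ Finset.Icc j n, (s i : ℝ) * a i * x ^ ((j : ℤ) - i)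

section tailSum

variable {n : ℕ} {s : ℕ → ℤ} {a : ℕ → ℕ}

theorem tailSum_self (x : ℝ) : tailSum n s a n x = s n * a n := by
  simp [tailSum]

theorem tailSum_eq_add_div {j : ℕ} (hjn : j < n) {x : ℝ} (hx : x ≠ 0) :
    tailSum n s a j x = s j * a j + tailSum n s a (j + 1) x / x := by
  rw [tailSum, ← Finset.insert_Icc_add_one_left_eq_Icc hjn.le, Finset.sum_insert (by simp), tailSum,
    Finset.sum_div]
  congr 1
  · simp
  · refine Finset.sum_congr rfl fun i _ => ?_
    rw [mul_div_assoc, div_eq_mul_inv, ← zpow_sub_one₀ hx]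
    push_cast
    ring_nf

theorem continuousOn_tailSum (j : ℕ) {S : Set ℝ} (hS : (0 : ℝ) ∉ S) :
    ContinuousOn (tailSum n s a j) S := by
  refine continuousOn_finsetSum _ fun i _ => continuousOn_const.mul ?_
  exact continuousOn_id.zpow₀ _ fun x hx => Or.inl fun h => hS (h ▸ hx)

end tailSum

theorem intCast_mul_self_of_eq_one_or {σ : ℤ} (hσ : σ = 1 ∨ σ = -1) : (σ : ℝ) * σ = 1 := by
  rcases hσ with rfl | rfl <;> norm_num

theorem sign_mul_tailSum_eq {n k : ℕ} {s : ℕ → ℤ} {a : ℕ → ℕ} {x : ℝ}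
    (hsk : s k = 1 ∨ s k = -1) (hsk1 : s (k + 1) = 1 ∨ s (k + 1) = -1) (hk : k < n) (hx : x ≠ 0) :
    (s k : ℝ) * tailSum n s a k x
      = a k + (s k * s (k + 1) : ℤ) * (s (k + 1) * tailSum n s a (k + 1) x / x) := by
  rw [tailSum_eq_add_div hk hx]
  push_cast
  linear_combination (a k : ℝ) * intCast_mul_self_of_eq_one_or hsk
    - s k * tailSum n s a (k + 1) x / x * intCast_mul_self_of_eq_one_or hsk1

theorem add_sign_mul_mem_Ioo {d x u : ℝ} {e : ℤ} (he : e = 1 ∨ e = -1) (hu : u ∈ Set.Ioo 0 1)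
    (hd : 0 ≤ d) (hdx : d + 1 ≤ x) (hflip : e = -1 → 1 ≤ d) : d + e * u ∈ Set.Ioo 0 x := by
  obtain ⟨hu0, hu1⟩ := hu
  rcases he with rfl | rfl
  · constructor <;> push_cast <;> linarith
  · have := hflip rfl
    constructor <;> push_cast <;> linarith

theorem sign_mul_tailSum_mem_Ioo {n j₀ : ℕ} {s : ℕ → ℤ} {a : ℕ → ℕ} {x : ℝ}
    (hs : ∀ i, j₀ ≤ i → i ≤ n → s i = 1 ∨ s i = -1)
    (ha : ∀ i, j₀ ≤ i → i ≤ n → (a i : ℝ) + 1 ≤ x)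
    (hflip : ∀ i, j₀ ≤ i → i < n → a i = 0 → s (i + 1) = s i) (han : a n ≠ 0)
    {j : ℕ} (hj : j₀ ≤ j) (hjn : j ≤ n) :
    (s j : ℝ) * tailSum n s a j x ∈ Set.Ioo 0 x := by
  have hx : 0 < x := by
    have := ha n (hj.trans hjn) le_rfl
    linarith [(a n).cast_nonneg (α := ℝ)]
  induction hjn using Nat.decreasingInduction with
  | self =>
    have han' : (1 : ℝ) ≤ a n := by exact_mod_cast Nat.one_le_iff_ne_zero.mpr han
    rw [tailSum_self, ← mul_assoc, intCast_mul_self_of_eq_one_or (hs n hj le_rfl), one_mul]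
    exact ⟨by linarith, by linarith [ha n hj le_rfl]⟩
  | of_succ k hk ih =>
    obtain ⟨h0, hx1⟩ := ih (hj.trans k.le_succ)
    have hsk := hs k hj hk.le
    have hsk1 := hs (k + 1) (hj.trans k.le_succ) hk
    rw [sign_mul_tailSum_eq hsk hsk1 hk hx.ne']
    refine add_sign_mul_mem_Ioo ?_ ⟨div_pos h0 hx, (div_lt_one hx).mpr hx1⟩ (Nat.cast_nonneg _)
      (ha k hj hk.le) fun he => ?_
    · rcases hsk with h | h <;> rcases hsk1 with h' | h' <;> simp [h, h']
    · have hne : s (k + 1) ≠ s k := by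
        rcases hsk with h | h <;> rcases hsk1 with h' | h' <;> simp_all
      exact_mod_cast Nat.one_le_iff_ne_zero.mpr fun h => hne (hflip k hj hk h)

theorem mapsTo_tailSum_one {n : ℕ} (hn : 2 ≤ n) {s : ℕ → ℤ} {a : ℕ → ℕ}
    (hs1 : s 1 = 1) (hs : ∀ j : ℕ, 1 ≤ j → j ≤ n → s j = 1 ∨ s j = -1) (han : a n ≠ 0)
    (H1 : ∀ j : ℕ, 2 ≤ j → j ≤ n → a j < ItSeq n s a 1)
    (H3 : ∀ j : ℕ, 1 ≤ j → j ≤ n - 1 → a j = 0 → s (j + 1) = s j) :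
    Set.MapsTo (tailSum n s a 1) (Set.Icc (ItSeq n s a 1 : ℝ) (ItSeq n s a 1 + 1))
      (Set.Ioo (ItSeq n s a 1 : ℝ) (ItSeq n s a 1 + 1)) := by
  intro x ⟨hMx, _⟩
  have hdigit : ∀ i, 2 ≤ i → i ≤ n → (a i : ℝ) + 1 ≤ x := fun i hi hin =>
    le_trans (by exact_mod_cast H1 i hi hin) hMx
  obtain ⟨hT0, hTx⟩ := sign_mul_tailSum_mem_Ioo (j := 2) (fun i hi hin => hs i (by omega) hin)
    hdigit (fun i hi hin => H3 i (by omega) (by omega)) han le_rfl hn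
  have hx : 0 < x := hT0.trans hTx
  have hT := sign_mul_tailSum_eq (a := a) (hs 1 le_rfl (by omega)) (hs 2 (by omega) hn)
    (by omega : 1 < n) hx.ne'
  simp only [hs1, Int.cast_one, one_mul, Nat.reduceAdd] at hT
  obtain ⟨u, hu0, hu1, hu⟩ : ∃ u : ℝ, 0 < u ∧ u < 1 ∧ tailSum n s a 1 x = a 1 + s 2 * u :=
    ⟨_, div_pos hT0 hx, (div_lt_one hx).mpr hTx, hT⟩
  rw [hu]
  have h1n : 1 ≠ n := by omega
  rcases hs 2 (by omega) hn with h2 | h2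
  · have hM : ItSeq n s a 1 = a 1 := by simp [ItSeq, h1n, h2, hs1]
    rw [hM, h2]
    push_cast
    exact ⟨by linarith, by linarith⟩
  · have ha1 : a 1 ≠ 0 := fun h => by simpa [h2, hs1] using H3 1 le_rfl (by omega) h
    have hM : ((ItSeq n s a 1 + 1 : ℕ) : ℝ) = a 1 := by
      congr 1
      simp [ItSeq, h1n, h2, hs1]
      omega
    rw [h2]
    push_cast at hM ⊢
    exact ⟨by linarith, by linarith⟩

/-- Under hypotheses (H1) and (H3), there exists `β ∈ (It(1), It(1)+1)` with
`β = s(1)a(1) + s(2)a(2)/β + … + s(n)a(n)/β^{n−1}`. -/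
theorem stmt11 (n : ℕ) (hn : 2 ≤ n) (s : ℕ → ℤ) (a : ℕ → ℕ)
    (hs1 : s 1 = 1) (hs : ∀ j : ℕ, 1 ≤ j → j ≤ n → s j = 1 ∨ s j = -1) (han : a n ≠ 0)
    (H1 : ∀ j : ℕ, 2 ≤ j → j ≤ n → a j < ItSeq n s a 1)
    (H3 : ∀ j : ℕ, 1 ≤ j → j ≤ n - 1 → a j = 0 → s (j + 1) = s j) :
    ∃ β : ℝ, β ∈ Set.Ioo (ItSeq n s a 1 : ℝ) ((ItSeq n s a 1 : ℝ) + 1) ∧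
      β = ∑ j ∈ Finset.Icc 1 n, (s j : ℝ) * (a j : ℝ) * β ^ (1 - (j : ℤ)) := by
  have hmaps := mapsTo_tailSum_one hn hs1 hs han H1 H3
  have hpos : (0 : ℝ) < ItSeq n s a 1 := by
    exact_mod_cast (Nat.zero_le _).trans_lt (H1 n hn le_rfl)
  obtain ⟨β, hβ, hfix⟩ := exists_mem_Icc_isFixedPt_of_mapsTo
    (continuousOn_tailSum 1 fun h => hpos.not_ge h.1) (by linarith)
    (hmaps.mono_right Set.Ioo_subset_Icc_self)
  refine ⟨β, hfix ▸ hmaps hβ, ?_⟩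
  simpa [tailSum] using hfix.symm
end
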